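/- For δ > 0, define the coincidence count φ^{coinc}_δ(x¹,x²) = #{(u,v) ∈ x¹ × x² : |u − v| ≤ δ} and the kernel h(x,y) = ½(φ^{coinc}_δ(x¹,x²) + φ^{coinc}_δ(y¹,y²) − φ^{coinc}_δ(x¹,y²) − φ^{coinc}_δ(y¹,x²)). Then h is continuous, with respect to the product Skorohod-type metric d, at every point ((x¹,x²),(y¹,y²)) of the set C_δ = {((x¹,x²),(y¹,y²)) : (x¹ ∪ y¹) ∩ ((x² ± δ) ∪ (y² ± δ)) = ∅}, where x² ± δ denotes {v + δ : v ∈ x²} ∪ {v − δ : v ∈ x²}. -/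

import Mathlib

/-!
Once `d_X(a, a') < r ≤ 1`, the integer-valued counting functions agree exactly after a time
change `λ` with `|λ t - t| < r`, so `λ` maps `a'` bijectively onto `a`, moving every point by
less than `r`. A coincidence count can change only when some difference `u - v` crosses `±δ`.
On `C_δ` all the relevant differences stay a positive distance `g` away from `±δ`, so for
`d ≤ min (g / 4) (1 / 2)` the four coincidence counts, and with them `h`, do not change at all:
`h` is locally constant on `C_δ`.
-/

open Set

/-- The counting function of a finite point configuration `x ⊆ [0,1]`:
`N_x(t) = #{u ∈ x : u ≤ t}`. -/
noncomputable def countFn (x : Finset ℝ) (t : ℝ) : ℝ :=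
  ((x.filter (fun u => u ≤ t)).card : ℝ)

/-- A strictly increasing continuous mapping of `[0,1]` onto itself. -/
def IsTimeChange (l : ℝ → ℝ) : Prop :=
  StrictMonoOn l (Set.Icc 0 1) ∧ ContinuousOn l (Set.Icc 0 1) ∧
    l '' Set.Icc 0 1 = Set.Icc 0 1

/-- The uniform Skorohod metric on (càdlàg) functions on `[0,1]`. -/
noncomputable def dD (f g : ℝ → ℝ) : ℝ :=
  sInf {ε : ℝ | 0 < ε ∧ ∃ l : ℝ → ℝ, IsTimeChange l ∧
    (∀ t ∈ Set.Icc (0:ℝ) 1, |l t - t| ≤ ε) ∧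
    (∀ t ∈ Set.Icc (0:ℝ) 1, |f (l t) - g t| ≤ ε)}

/-- The induced metric on finite point configurations. -/
noncomputable def dX (x y : Finset ℝ) : ℝ := dD (countFn x) (countFn y)

/-- The sup product metric on `X² = X × X`. -/
noncomputable def dX2 (a b : Finset ℝ × Finset ℝ) : ℝ := max (dX a.1 b.1) (dX a.2 b.2)

/-- The sup product metric on `(X²)²`. -/
noncomputable def dXX (p q : (Finset ℝ × Finset ℝ) × (Finset ℝ × Finset ℝ)) : ℝ :=
  max (dX2 p.1 q.1) (dX2 p.2 q.2)

/-- The coincidence count with delay `δ`: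
`φ^{coinc}_δ(a,b) = #{(u,v) ∈ a × b : |u − v| ≤ δ}`. -/
noncomputable def phiCoinc (δ : ℝ) (a b : Finset ℝ) : ℝ :=
  (((a ×ˢ b).filter (fun p => |p.1 - p.2| ≤ δ)).card : ℝ)

/-- The coincidence kernel `h_{φ^{coinc}_δ}`. -/
noncomputable def hCoinc (δ : ℝ) (x y : Finset ℝ × Finset ℝ) : ℝ :=
  (phiCoinc δ x.1 x.2 + phiCoinc δ y.1 y.2 - phiCoinc δ x.1 y.2 - phiCoinc δ y.1 x.2) / 2

/-- Membership in the set `C_δ`: `(x¹ ∪ y¹) ∩ ((x² ± δ) ∪ (y² ± δ)) = ∅`. -/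
def memCδ (δ : ℝ) (x y : Finset ℝ × Finset ℝ) : Prop :=
  ∀ u ∈ x.1 ∪ y.1, ∀ v ∈ x.2 ∪ y.2, u ≠ v + δ ∧ u ≠ v - δ

lemma Nat.eq_of_abs_cast_sub_lt_one {m n : ℕ} (h : |(m : ℝ) - n| < 1) : m = n := by
  have h' : |((m : ℤ) - n : ℤ)| < 1 := by exact_mod_cast h
  have := Int.abs_lt_one_iff.mp h'
  omega

lemma countFn_nonneg (a : Finset ℝ) (t : ℝ) : 0 ≤ countFn a t := Nat.cast_nonneg _

lemma countFn_le_card (a : Finset ℝ) (t : ℝ) : countFn a t ≤ a.card := by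
  unfold countFn
  exact_mod_cast Finset.card_filter_le a _

lemma countFn_eq_zero_of_lt {a : Finset ℝ} (ha : ∀ z ∈ a, 0 ≤ z) {t : ℝ} (ht : t < 0) :
    countFn a t = 0 := by
  unfold countFn
  rw [Finset.filter_false_of_mem fun z hz => not_le.mpr (ht.trans_le (ha z hz)),
    Finset.card_empty, Nat.cast_zero]

lemma countFn_eq_of_abs_sub_lt_one {a b : Finset ℝ} {s t : ℝ}
    (h : |countFn a s - countFn b t| < 1) : countFn a s = countFn b t :=
  congrArg _ (Nat.eq_of_abs_cast_sub_lt_one h)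

lemma mem_iff_forall_countFn_lt (a : Finset ℝ) (u : ℝ) :
    u ∈ a ↔ ∀ s < u, countFn a s < countFn a u := by
  refine ⟨fun hu s hs => ?_, fun H => ?_⟩
  · unfold countFn
    refine Nat.cast_lt.mpr (Finset.card_lt_card ?_)
    refine (Finset.ssubset_iff_of_subset fun z hz => ?_).mpr
      ⟨u, Finset.mem_filter.mpr ⟨hu, le_rfl⟩, fun h => (Finset.mem_filter.mp h).2.not_gt hs⟩
    obtain ⟨hza, hzs⟩ := Finset.mem_filter.mp hz
    exact Finset.mem_filter.mpr ⟨hza, hzs.trans hs.le⟩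
  · by_contra hu
    -- `s` is the last point of `a` before `u`, so `a` has no point in `(s, u]`
    set S := insert (u - 1) (a.filter (· < u))
    have hS : ∀ z ∈ S, z < u := by
      intro z hz
      rcases Finset.mem_insert.mp hz with rfl | hz
      · linarith
      · exact (Finset.mem_filter.mp hz).2
    set s := S.max' (Finset.insert_nonempty _ _)
    have hs : s < u := hS s (Finset.max'_mem _ _)
    refine (H s hs).ne ?_
    unfold countFn
    congr 2
    refine Finset.filter_congr fun z hz => ⟨fun h => h.trans hs.le, fun h => Finset.le_max' _ _ ?_⟩
    exact Finset.mem_insert_of_mem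
      (Finset.mem_filter.mpr ⟨hz, h.lt_of_ne (ne_of_mem_of_not_mem hz hu)⟩)

lemma mem_iff_countFn_pos_and_forall_countFn_lt {a : Finset ℝ} (ha : ∀ z ∈ a, 0 ≤ z)
    {u : ℝ} (hu : u ∈ Icc (0 : ℝ) 1) :
    u ∈ a ↔ 0 < countFn a u ∧ ∀ s ∈ Icc (0 : ℝ) 1, s < u → countFn a s < countFn a u := by
  rw [mem_iff_forall_countFn_lt]
  refine ⟨fun H => ⟨?_, fun s _ hs => H s hs⟩, fun ⟨hpos, H⟩ s hs => ?_⟩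
  · simpa [countFn_eq_zero_of_lt ha (by norm_num : (-1 : ℝ) < 0)] using H (-1) (by linarith [hu.1])
  · by_cases hs0 : 0 ≤ s
    · exact H s ⟨hs0, hs.le.trans hu.2⟩ hs
    · rwa [countFn_eq_zero_of_lt ha (not_le.mp hs0)]

lemma isTimeChange_id : IsTimeChange id :=
  ⟨strictMonoOn_id, continuousOn_id, Set.image_id _⟩

namespace IsTimeChange

variable {l : ℝ → ℝ}

lemma mapsTo (hl : IsTimeChange l) {t : ℝ} (ht : t ∈ Icc (0 : ℝ) 1) : l t ∈ Icc (0 : ℝ) 1 :=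
  hl.2.2.le (mem_image_of_mem l ht)

lemma surjOn (hl : IsTimeChange l) {z : ℝ} (hz : z ∈ Icc (0 : ℝ) 1) :
    ∃ t ∈ Icc (0 : ℝ) 1, l t = z :=
  hl.2.2.ge hz

variable {a a' : Finset ℝ}

lemma apply_mem_iff_of_countFn_comp_eq (hl : IsTimeChange l) (ha : ∀ z ∈ a, z ∈ Icc (0 : ℝ) 1)
    (ha' : ∀ z ∈ a', z ∈ Icc (0 : ℝ) 1) (hN : ∀ t ∈ Icc (0 : ℝ) 1, countFn a (l t) = countFn a' t)
    {u : ℝ} (hu : u ∈ Icc (0 : ℝ) 1) : l u ∈ a ↔ u ∈ a' := by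
  rw [mem_iff_countFn_pos_and_forall_countFn_lt (fun z hz => (ha z hz).1) (hl.mapsTo hu),
    mem_iff_countFn_pos_and_forall_countFn_lt (fun z hz => (ha' z hz).1) hu, hN u hu]
  refine and_congr_right' ⟨fun H s hs hsu => ?_, fun H s' hs' hsu => ?_⟩
  · rw [← hN s hs]
    exact H (l s) (hl.mapsTo hs) (hl.1 hs hu hsu)
  · obtain ⟨s, hs, rfl⟩ := hl.surjOn hs'
    rw [hN s hs]
    exact H s hs ((hl.1.lt_iff_lt hs hu).mp hsu)

lemma image_eq_of_countFn_comp_eq (hl : IsTimeChange l) (ha : ∀ z ∈ a, z ∈ Icc (0 : ℝ) 1)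
    (ha' : ∀ z ∈ a', z ∈ Icc (0 : ℝ) 1) (hN : ∀ t ∈ Icc (0 : ℝ) 1, countFn a (l t) = countFn a' t) :
    a'.image l = a := by
  ext z
  rw [Finset.mem_image]
  refine ⟨fun ⟨u, hu, hz⟩ => ?_, fun hz => ?_⟩
  · exact hz ▸ (apply_mem_iff_of_countFn_comp_eq hl ha ha' hN (ha' u hu)).mpr hu
  · obtain ⟨u, hu, rfl⟩ := hl.surjOn (ha z hz)
    exact ⟨u, (apply_mem_iff_of_countFn_comp_eq hl ha ha' hN hu).mp hz, rfl⟩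

end IsTimeChange

lemma exists_timeChange_of_dX_lt {a a' : Finset ℝ} {r : ℝ} (h : dX a a' < r) :
    ∃ l, IsTimeChange l ∧ (∀ t ∈ Icc (0 : ℝ) 1, |l t - t| < r) ∧
      ∀ t ∈ Icc (0 : ℝ) 1, |countFn a (l t) - countFn a' t| < r := by
  have hne : {ε : ℝ | 0 < ε ∧ ∃ l : ℝ → ℝ, IsTimeChange l ∧
      (∀ t ∈ Icc (0 : ℝ) 1, |l t - t| ≤ ε) ∧
      (∀ t ∈ Icc (0 : ℝ) 1, |countFn a (l t) - countFn a' t| ≤ ε)}.Nonempty := by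
    refine ⟨a.card + a'.card + 1, by positivity, id, isTimeChange_id, fun t _ => ?_, fun t _ => ?_⟩
    · simp only [id_eq, sub_self, abs_zero]
      positivity
    · have := countFn_le_card a (id t)
      have := countFn_le_card a' t
      have := countFn_nonneg a (id t)
      have := countFn_nonneg a' t
      rw [abs_sub_le_iff]
      constructor <;> linarith
  obtain ⟨ε, ⟨-, l, hl, hlt, hN⟩, hεr⟩ := exists_lt_of_csInf_lt hne h
  exact ⟨l, hl, fun t ht => (hlt t ht).trans_lt hεr, fun t ht => (hN t ht).trans_lt hεr⟩

lemma exists_injOn_image_eq_of_dX_lt {a a' : Finset ℝ} (ha : ∀ z ∈ a, z ∈ Icc (0 : ℝ) 1)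
    (ha' : ∀ z ∈ a', z ∈ Icc (0 : ℝ) 1) {r : ℝ} (hr : r ≤ 1) (h : dX a a' < r) :
    ∃ l : ℝ → ℝ, Set.InjOn l a' ∧ a'.image l = a ∧ ∀ u ∈ a', |l u - u| < r := by
  obtain ⟨l, hl, hlt, hN⟩ := exists_timeChange_of_dX_lt h
  have hN' : ∀ t ∈ Icc (0 : ℝ) 1, countFn a (l t) = countFn a' t :=
    fun t ht => countFn_eq_of_abs_sub_lt_one ((hN t ht).trans_le hr)
  exact ⟨l, hl.1.injOn.mono fun z hz => ha' z hz, hl.image_eq_of_countFn_comp_eq ha ha' hN',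
    fun u hu => hlt u (ha' u hu)⟩

lemma abs_le_iff_abs_le_of_abs_sub_lt {A B δ : ℝ} (h : |A - B| < |(|A| - δ)|) :
    |A| ≤ δ ↔ |B| ≤ δ := by
  have h' := (abs_abs_sub_abs_le_abs_sub A B).trans_lt h
  rcases abs_cases (|A| - δ) with ⟨hδ, hδ'⟩ | ⟨hδ, hδ'⟩ <;>
    rcases abs_cases (|A| - |B|) with ⟨hAB, hAB'⟩ | ⟨hAB, hAB'⟩ <;>
    constructor <;> intro <;> linarith

lemma phiCoinc_image_image {δ : ℝ} {a b : Finset ℝ} {σ τ : ℝ → ℝ} (hσ : Set.InjOn σ a)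
    (hτ : Set.InjOn τ b)
    (hclose : ∀ u ∈ a, ∀ v ∈ b, |(σ u - τ v) - (u - v)| < |(|σ u - τ v| - δ)|) :
    phiCoinc δ (a.image σ) (b.image τ) = phiCoinc δ a b := by
  unfold phiCoinc
  have hinj : Set.InjOn (Prod.map σ τ) (a ×ˢ b : Finset _) := by
    rw [Finset.coe_product]
    exact hσ.prodMap hτ
  rw [← Finset.prodMap_image_product, Finset.filter_image,
    Finset.card_image_of_injOn (hinj.mono (Finset.filter_subset _ _))]
  congr 2
  exact Finset.filter_congr fun p hp => abs_le_iff_abs_le_of_abs_sub_lt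
    (hclose p.1 (Finset.mem_product.mp hp).1 p.2 (Finset.mem_product.mp hp).2)

lemma phiCoinc_eq_of_dX_lt {δ r : ℝ} {a b a' b' : Finset ℝ} (ha : ∀ z ∈ a, z ∈ Icc (0 : ℝ) 1)
    (hb : ∀ z ∈ b, z ∈ Icc (0 : ℝ) 1) (ha' : ∀ z ∈ a', z ∈ Icc (0 : ℝ) 1)
    (hb' : ∀ z ∈ b', z ∈ Icc (0 : ℝ) 1) (hr : r ≤ 1)
    (hgap : ∀ u ∈ a, ∀ v ∈ b, 2 * r < |(|u - v| - δ)|) (haa' : dX a a' < r) (hbb' : dX b b' < r) :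
    phiCoinc δ a' b' = phiCoinc δ a b := by
  obtain ⟨σ, hσ, rfl, hσr⟩ := exists_injOn_image_eq_of_dX_lt ha ha' hr haa'
  obtain ⟨τ, hτ, rfl, hτr⟩ := exists_injOn_image_eq_of_dX_lt hb hb' hr hbb'
  refine (phiCoinc_image_image hσ hτ fun u hu v hv => ?_).symm
  calc |(σ u - τ v) - (u - v)| = |(σ u - u) - (τ v - v)| := by ring_nf
    _ ≤ |σ u - u| + |τ v - v| := abs_sub _ _
    _ < 2 * r := by linarith [hσr u hu, hτr v hv]
    _ < |(|σ u - τ v| - δ)| :=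
      hgap _ (Finset.mem_image_of_mem σ hu) _ (Finset.mem_image_of_mem τ hv)

open Filter Topology in
lemma Finset.exists_pos_forall_lt {α : Type*} {S : Finset α} {f : α → ℝ} (hf : ∀ p ∈ S, 0 < f p) :
    ∃ g > 0, ∀ p ∈ S, g < f p :=
  (eventually_mem_nhdsWithin.and ((eventually_all_finset S).2 fun p hp =>
    nhdsWithin_le_nhds (eventually_lt_nhds (hf p hp)))).exists (f := 𝓝[>] (0 : ℝ))

lemma memCδ.exists_gap {δ : ℝ} {x y : Finset ℝ × Finset ℝ} (h : memCδ δ x y) :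
    ∃ g > 0, ∀ u ∈ x.1 ∪ y.1, ∀ v ∈ x.2 ∪ y.2, g < |(|u - v| - δ)| := by
  obtain ⟨g, hg, hgap⟩ := Finset.exists_pos_forall_lt (S := (x.1 ∪ y.1) ×ˢ (x.2 ∪ y.2))
    (f := fun p => |(|p.1 - p.2| - δ)|) fun p hp => by
      obtain ⟨hu, hv⟩ := Finset.mem_product.mp hp
      refine abs_pos.mpr (sub_ne_zero.mpr fun hδ => ?_)
      rcases abs_eq (hδ ▸ abs_nonneg _) |>.mp hδ with h' | h'
      · exact (h _ hu _ hv).1 (by linarith)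
      · exact (h _ hu _ hv).2 (by linarith)
  exact ⟨g, hg, fun u hu v hv => hgap (u, v) (Finset.mem_product.mpr ⟨hu, hv⟩)⟩

theorem stmt_4_general (δ : ℝ)
    (x y : Finset ℝ × Finset ℝ)
    (hx1 : ∀ u ∈ x.1, u ∈ Set.Icc (0:ℝ) 1) (hx2 : ∀ v ∈ x.2, v ∈ Set.Icc (0:ℝ) 1)
    (hy1 : ∀ u ∈ y.1, u ∈ Set.Icc (0:ℝ) 1) (hy2 : ∀ v ∈ y.2, v ∈ Set.Icc (0:ℝ) 1)
    (hC : memCδ δ x y) :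
    ∀ ε > 0, ∃ η > 0, ∀ x' y' : Finset ℝ × Finset ℝ,
      (∀ u ∈ x'.1, u ∈ Set.Icc (0:ℝ) 1) → (∀ v ∈ x'.2, v ∈ Set.Icc (0:ℝ) 1) →
      (∀ u ∈ y'.1, u ∈ Set.Icc (0:ℝ) 1) → (∀ v ∈ y'.2, v ∈ Set.Icc (0:ℝ) 1) →
      dXX (x, y) (x', y') ≤ η → |hCoinc δ (x'.1, x'.2) (y'.1, y'.2) - hCoinc δ x y| ≤ ε := by
  intro ε hε
  obtain ⟨g, hg, hgap⟩ := hC.exists_gap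
  set η := min (g / 4) (1 / 2)
  have hη : 0 < η := by positivity
  have hr : 2 * η ≤ 1 := by linarith [min_le_right (g / 4) (1 / 2)]
  have hgap' : ∀ u ∈ x.1 ∪ y.1, ∀ v ∈ x.2 ∪ y.2, 2 * (2 * η) < |(|u - v| - δ)| :=
    fun u hu v hv => lt_of_le_of_lt (by linarith [min_le_left (g / 4) (1 / 2)]) (hgap u hu v hv)
  refine ⟨η, hη, fun x' y' hx1' hx2' hy1' hy2' hd => ?_⟩
  obtain ⟨⟨hdx1, hdx2⟩, hdy1, hdy2⟩ : (dX x.1 x'.1 < 2 * η ∧ dX x.2 x'.2 < 2 * η) ∧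
      dX y.1 y'.1 < 2 * η ∧ dX y.2 y'.2 < 2 * η := by
    simp only [dXX, dX2, max_le_iff] at hd
    refine ⟨⟨?_, ?_⟩, ?_, ?_⟩ <;> linarith [hd.1.1, hd.1.2, hd.2.1, hd.2.2]
  have hxx := phiCoinc_eq_of_dX_lt hx1 hx2 hx1' hx2' hr
    (fun u hu v hv => hgap' u (Finset.mem_union_left _ hu) v (Finset.mem_union_left _ hv))
    hdx1 hdx2
  have hyy := phiCoinc_eq_of_dX_lt hy1 hy2 hy1' hy2' hr
    (fun u hu v hv => hgap' u (Finset.mem_union_right _ hu) v (Finset.mem_union_right _ hv))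
    hdy1 hdy2
  have hxy := phiCoinc_eq_of_dX_lt hx1 hy2 hx1' hy2' hr
    (fun u hu v hv => hgap' u (Finset.mem_union_left _ hu) v (Finset.mem_union_right _ hv))
    hdx1 hdy2
  have hyx := phiCoinc_eq_of_dX_lt hy1 hx2 hy1' hx2' hr
    (fun u hu v hv => hgap' u (Finset.mem_union_right _ hu) v (Finset.mem_union_left _ hv))
    hdy1 hdx2
  simp only [hCoinc, hxx, hyy, hxy, hyx, sub_self, abs_zero]
  exact hε.le

/-- The coincidence kernel `h_{φ^{coinc}_δ}` is continuous (w.r.t. the product Skorohod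
metric `d`) at every point of `C_δ`. -/
theorem stmt_4 (δ : ℝ) (hδ : 0 < δ)
    (x y : Finset ℝ × Finset ℝ)
    (hx1 : ∀ u ∈ x.1, u ∈ Set.Icc (0:ℝ) 1) (hx2 : ∀ v ∈ x.2, v ∈ Set.Icc (0:ℝ) 1)
    (hy1 : ∀ u ∈ y.1, u ∈ Set.Icc (0:ℝ) 1) (hy2 : ∀ v ∈ y.2, v ∈ Set.Icc (0:ℝ) 1)
    (hC : memCδ δ x y) :
    ∀ ε > 0, ∃ η > 0, ∀ x' y' : Finset ℝ × Finset ℝ,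
      (∀ u ∈ x'.1, u ∈ Set.Icc (0:ℝ) 1) → (∀ v ∈ x'.2, v ∈ Set.Icc (0:ℝ) 1) →
      (∀ u ∈ y'.1, u ∈ Set.Icc (0:ℝ) 1) → (∀ v ∈ y'.2, v ∈ Set.Icc (0:ℝ) 1) →
      dXX (x, y) (x', y') ≤ η → |hCoinc δ (x'.1, x'.2) (y'.1, y'.2) - hCoinc δ x y| ≤ ε :=
  stmt_4_general δ x y hx1 hx2 hy1 hy2 hC
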